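/- Let G be a finite connected graph with δ-thin triangles and let u,v be a pair of mutually distant vertices of G. Then d_G(u,v) ≥ 2·rad(G) − 2δ − 1. In particular, diam(G) ≥ 2·rad(G) − 2δ − 1. -/

import Mathlib

/-!
Let `m` be the vertex of a geodesic from `u` to `v` at distance `⌊d/2⌋` from `u`, where
`d = d(u,v)`. For any vertex `w`, the Gromov products `(v|w)_u` and `(u|w)_v` sum to `d`, so
`m` lies within the thin part of the geodesic triangle `u v w` seen from `u` or from `v`.
Thinness then moves `m` within `δ` of a geodesic from that endpoint to `w`, and since `u` and
`v` are mutually distant, `d(u,w), d(v,w) ≤ d`; this gives `d(m,w) ≤ δ + ⌈d/2⌉`. Hence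
`rad(G) ≤ ecc(m) ≤ δ + (d+1)/2`.
-/

open SimpleGraph

variable {V : Type*}

/-- Eccentricity of a vertex: the largest distance from `v` to any vertex. -/
noncomputable def ecc [Fintype V] (G : SimpleGraph V) (v : V) : ℕ :=
  Finset.univ.sup fun u => G.dist v u

/-- Radius: the minimum eccentricity. -/
noncomputable def rad [Fintype V] (G : SimpleGraph V) : ℕ :=
  sInf (Set.range (ecc G))

/-- Diameter: the maximum eccentricity. -/
noncomputable def gdiam [Fintype V] (G : SimpleGraph V) : ℕ :=
  Finset.univ.sup fun v => ecc G v

/-- `G` has δ-thin triangles: for all vertices `x y z`, all geodesics `p1` from `x` to `y`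
and `p2` from `x` to `z`, and all vertices `u ∈ p1`, `v ∈ p2` with
`d(x,u) = d(x,v) ≤ (y|z)_x`, one has `d(u,v) ≤ δ`.  The Gromov product condition
`d(x,u) ≤ (y|z)_x = (d(x,y) + d(x,z) - d(y,z))/2` is written additively in `ℕ`. -/
def ThinTriangles (G : SimpleGraph V) (δ : ℝ) : Prop :=
  ∀ (x y z : V) (p1 : G.Walk x y) (p2 : G.Walk x z),
    p1.length = G.dist x y → p2.length = G.dist x z →
    ∀ u ∈ p1.support, ∀ v ∈ p2.support,
      G.dist x u = G.dist x v →
      2 * G.dist x u + G.dist y z ≤ G.dist x y + G.dist x z →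
      (G.dist u v : ℝ) ≤ δ

section Eccentricity

variable [Fintype V] {G : SimpleGraph V}

lemma dist_le_ecc (v w : V) : G.dist v w ≤ ecc G v :=
  Finset.le_sup (Finset.mem_univ w)

lemma exists_dist_eq_ecc [Nonempty V] (v : V) : ∃ w, G.dist v w = ecc G v := by
  obtain ⟨w, -, hw⟩ := Finset.exists_mem_eq_sup Finset.univ Finset.univ_nonempty (G.dist v)
  exact ⟨w, hw.symm⟩

lemma rad_le_ecc (v : V) : rad G ≤ ecc G v :=
  Nat.sInf_le ⟨v, rfl⟩

lemma ecc_le_gdiam (v : V) : ecc G v ≤ gdiam G :=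
  Finset.le_sup (f := ecc G) (Finset.mem_univ v)

lemma rad_le_of_forall_dist_le [Nonempty V] {c : ℝ} (m : V) (h : ∀ w, (G.dist m w : ℝ) ≤ c) :
    (rad G : ℝ) ≤ c := by
  obtain ⟨w, hw⟩ := exists_dist_eq_ecc (G := G) m
  calc (rad G : ℝ) ≤ ecc G m := by exact_mod_cast rad_le_ecc m
    _ = G.dist m w := by rw [hw]
    _ ≤ c := h w

end Eccentricity

namespace SimpleGraph.Walk

variable {G : SimpleGraph V}

lemma dist_getVert_of_length_eq_dist {x y : V} (p : G.Walk x y) (hp : p.length = G.dist x y)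
    {t : ℕ} (ht : t ≤ G.dist x y) :
    G.dist x (p.getVert t) = t ∧ G.dist (p.getVert t) y = G.dist x y - t := by
  have htake : G.dist x (p.getVert t) ≤ t := by
    simpa [ht, hp] using G.dist_le (p.take t)
  have hdrop : G.dist (p.getVert t) y ≤ G.dist x y - t := by
    simpa [hp] using G.dist_le (p.drop t)
  have htri := (p.take t).reachable.dist_triangle_left y
  omega

lemma exists_mem_support_dist_eq {x y : V} (p : G.Walk x y) (hp : p.length = G.dist x y)
    {t : ℕ} (ht : t ≤ G.dist x y) :
    ∃ m ∈ p.support, G.dist x m = t ∧ G.dist m y = G.dist x y - t :=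
  ⟨p.getVert t, p.getVert_mem_support t, dist_getVert_of_length_eq_dist p hp ht⟩

end SimpleGraph.Walk

namespace ThinTriangles

variable {G : SimpleGraph V} {δ : ℝ}

-- `m` is `δ`-close to the vertex `m'` at the same distance from `x` on a geodesic to `w`.
lemma dist_le_of_gromov (hthin : ThinTriangles G δ) (hG : G.Connected) {x y w m : V}
    (p : G.Walk x y) (hp : p.length = G.dist x y) (hm : m ∈ p.support)
    (hgromov : 2 * G.dist x m + G.dist y w ≤ G.dist x y + G.dist x w) :
    (G.dist m w : ℝ) ≤ δ + G.dist x w - G.dist x m := by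
  obtain ⟨q, hq⟩ := hG.exists_walk_length_eq_dist x w
  have hxyw : G.dist x y ≤ G.dist x w + G.dist w y := hG.dist_triangle
  have hyw : G.dist w y = G.dist y w := G.dist_comm
  have hmw : G.dist x m ≤ G.dist x w := by omega
  obtain ⟨m', hm', hxm', hm'w⟩ := q.exists_mem_support_dist_eq hq hmw
  have hclose : (G.dist m m' : ℝ) ≤ δ :=
    hthin x y w p q hp hq m hm m' hm' hxm'.symm hgromov
  have htri : G.dist m w ≤ G.dist m m' + G.dist m' w := hG.dist_triangle
  rw [hm'w] at htri
  have hcast := Nat.cast_le (α := ℝ).mpr htri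
  push_cast [hmw] at hcast
  linarith

lemma two_mul_dist_midpoint_le [Fintype V] (hthin : ThinTriangles G δ) (hG : G.Connected) {u v : V}
    (hu : G.dist u v = ecc G u) (hv : G.dist u v = ecc G v)
    (p : G.Walk u v) (hp : p.length = G.dist u v) {m : V} (hm : m ∈ p.support)
    (hum : G.dist u m = G.dist u v / 2) (hmv : G.dist m v = G.dist u v - G.dist u v / 2)
    (w : V) :
    2 * (G.dist m w : ℝ) ≤ 2 * δ + G.dist u v + 1 := by
  have huw : (G.dist u w : ℝ) ≤ G.dist u v := by exact_mod_cast hu ▸ dist_le_ecc u w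
  have hvw : (G.dist v w : ℝ) ≤ G.dist u v := by exact_mod_cast hv ▸ dist_le_ecc v w
  have hvu : G.dist v u = G.dist u v := G.dist_comm
  have hvm : G.dist v m = G.dist m v := G.dist_comm
  have hsum : (G.dist u m : ℝ) + G.dist v m = G.dist u v := by
    exact_mod_cast (by omega : G.dist u m + G.dist v m = G.dist u v)
  have hfloor : (G.dist u v : ℝ) ≤ 2 * G.dist u m + 1 := by
    exact_mod_cast (by omega : G.dist u v ≤ 2 * G.dist u m + 1)
  have hceil : 2 * (G.dist u m : ℝ) ≤ G.dist u v := by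
    exact_mod_cast (by omega : 2 * G.dist u m ≤ G.dist u v)
  by_cases hgromov : 2 * G.dist u m + G.dist v w ≤ G.dist u v + G.dist u w
  · have h := hthin.dist_le_of_gromov hG p hp hm hgromov
    linarith
  · have hgromov' : 2 * G.dist v m + G.dist u w ≤ G.dist v u + G.dist v w := by omega
    have hm' : m ∈ p.reverse.support := by simpa using hm
    have h := hthin.dist_le_of_gromov hG p.reverse (by simpa [hvu] using hp) hm' hgromov'
    linarith

end ThinTriangles

theorem stmt_2_general [Fintype V] (G : SimpleGraph V) (hG : G.Connected)
    (δ : ℝ) (hthin : ThinTriangles G δ)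
    (u v : V) (hu : G.dist u v = ecc G u) (hv : G.dist u v = ecc G v) :
    2 * (rad G : ℝ) - 2 * δ - 1 ≤ (G.dist u v : ℝ) ∧
    2 * (rad G : ℝ) - 2 * δ - 1 ≤ (gdiam G : ℝ) := by
  have : Nonempty V := hG.nonempty
  obtain ⟨p, hp⟩ := hG.exists_walk_length_eq_dist u v
  obtain ⟨m, hm, hum, hmv⟩ := p.exists_mem_support_dist_eq hp (Nat.div_le_self _ 2)
  have hrad : 2 * (rad G : ℝ) ≤ 2 * δ + G.dist u v + 1 := by
    have := rad_le_of_forall_dist_le (G := G) (c := δ + (G.dist u v + 1) / 2) m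
      fun w ↦ by linarith [hthin.two_mul_dist_midpoint_le hG hu hv p hp hm hum hmv w]
    linarith
  have hdiam : (G.dist u v : ℝ) ≤ gdiam G := by
    exact_mod_cast hu ▸ ecc_le_gdiam u
  constructor <;> linarith

/-- If `u, v` are mutually distant, then
`d(u,v) ≥ 2 rad(G) - 2δ - 1`; in particular `diam(G) ≥ 2 rad(G) - 2δ - 1`. -/
theorem stmt_2 [Fintype V] (G : SimpleGraph V) (hG : G.Connected)
    (δ : ℝ) (hδ : 0 ≤ δ) (hthin : ThinTriangles G δ)
    (u v : V) (hu : G.dist u v = ecc G u) (hv : G.dist u v = ecc G v) :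
    2 * (rad G : ℝ) - 2 * δ - 1 ≤ (G.dist u v : ℝ) ∧
    2 * (rad G : ℝ) - 2 * δ - 1 ≤ (gdiam G : ℝ) :=
  stmt_2_general G hG δ hthin u v hu hv
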